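/- (McDiarmid's inequality / method of bounded differences.) Let X_1, ..., X_N be independent random variables, with X_i taking values in a measurable space 𝒳_i, and let f : 𝒳_1 × ⋯ × 𝒳_N → ℝ be a bounded measurable function such that for every index i and all choices of coordinates, changing only the i-th coordinate changes the value of f by at most c_i, i.e. |f(x_1,...,x_{i-1}, b, x_{i+1},...,x_N) − f(x_1,...,x_{i-1}, b', x_{i+1},...,x_N)| ≤ c_i for all b, b' ∈ 𝒳_i. Then for every t > 0: Pr( f(X_1,...,X_N) > E[f(X_1,...,X_N)] + t ) ≤ exp(−2t²/∑_{i=1}^N c_i²) and Pr( f(X_1,...,X_N) < E[f(X_1,...,X_N)] − t ) ≤ exp(−2t²/∑_{i=1}^N c_i²). -/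

import Mathlib

open MeasureTheory ProbabilityTheory Real
open scoped NNReal

/-! Conditionally on all coordinates but the first, `f` minus its average over the first
coordinate has oscillation at most `c₀`, so by Hoeffding's lemma it is sub-Gaussian with
parameter `(c₀ / 2) ^ 2`. That average is a function of the remaining coordinates with the same
bounded differences, and integrating out the first coordinate (Fubini) adds the parameters.
By induction, `f - 𝔼 f` is sub-Gaussian with parameter `∑ (cᵢ / 2) ^ 2` under the product of
the laws of the `Xᵢ`, which is the joint law by independence; the Chernoff bound applied to
`±(f - 𝔼 f)` gives the two tails. -/

lemma exists_forall_mem_Icc_of_sub_le {α : Type*} [Nonempty α] {g : α → ℝ} {c : ℝ}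
    (h : ∀ a a', g a - g a' ≤ c) : ∃ L, ∀ a, g a ∈ Set.Icc L (L + c) := by
  obtain ⟨a₀⟩ := ‹Nonempty α›
  have hbdd : BddBelow (Set.range g) := ⟨g a₀ - c, by rintro _ ⟨a, rfl⟩; linarith [h a₀ a]⟩
  refine ⟨⨅ a, g a, fun a => ⟨ciInf_le hbdd a, ?_⟩⟩
  have : g a - c ≤ ⨅ a', g a' := le_ciInf fun a' => by linarith [h a a']
  linarith

namespace ProbabilityTheory

variable {α β : Type*} [MeasurableSpace α] [MeasurableSpace β]
  {μ : Measure α} {ν : Measure β} [IsProbabilityMeasure μ] [IsProbabilityMeasure ν]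

lemma hasSubgaussianMGF_sub_integral_of_sub_le {g : α → ℝ} (hg : Measurable g) {c : ℝ≥0}
    (h : ∀ a a', g a - g a' ≤ c) :
    HasSubgaussianMGF (fun a => g a - ∫ a', g a' ∂μ) ((c / 2) ^ 2) μ := by
  have := nonempty_of_isProbabilityMeasure μ
  obtain ⟨L, hL⟩ := exists_forall_mem_Icc_of_sub_le h
  simpa using hasSubgaussianMGF_of_mem_Icc hg.aemeasurable (ae_of_all μ hL)

lemma integral_sub_integral_le_of_sub_le {f g : α → ℝ} (hf : Integrable f μ)
    (hg : Integrable g μ) {c : ℝ} (h : ∀ a, f a - g a ≤ c) : ∫ a, f a ∂μ - ∫ a, g a ∂μ ≤ c := by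
  rw [← integral_sub hf hg]
  simpa using integral_mono (hf.sub hg) (integrable_const c) h

lemma HasSubgaussianMGF.prod_sub_integral {F : α × β → ℝ} (hF : Measurable F) {M : ℝ}
    (hM : ∀ p, |F p| ≤ M) {c K : ℝ≥0} (hosc : ∀ a a' y, F (a, y) - F (a', y) ≤ c)
    (hK : HasSubgaussianMGF (fun y => ∫ a, F (a, y) ∂μ - ∫ p, F p ∂(μ.prod ν)) K ν) :
    HasSubgaussianMGF (fun p => F p - ∫ q, F q ∂(μ.prod ν)) ((c / 2) ^ 2 + K) (μ.prod ν) := by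
  set m := ∫ q, F q ∂(μ.prod ν)
  set g := fun y => ∫ a, F (a, y) ∂μ
  have hint (t : ℝ) : Integrable (fun p => exp (t * (F p - m))) (μ.prod ν) :=
    integrable_exp_mul_of_mem_Icc (a := -M - m) (b := M - m) (hF.sub_const m).aemeasurable
      (ae_of_all _ fun p => by constructor <;> linarith [abs_le.1 (hM p)])
  refine ⟨hint, fun t => ?_⟩
  have hfiber (y : β) : mgf (fun a => F (a, y) - g y) μ t ≤ exp ((c / 2) ^ 2 * t ^ 2 / 2) :=
    (hasSubgaussianMGF_sub_integral_of_sub_le (hF.comp measurable_prodMk_right)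
      fun a a' => hosc a a' y).mgf_le t
  calc mgf (fun p => F p - m) (μ.prod ν) t
      = ∫ y, mgf (fun a => F (a, y) - g y) μ t * exp (t * (g y - m)) ∂ν := by
        rw [mgf, integral_prod_symm _ (hint t)]
        congr with y
        rw [mgf, ← integral_mul_const]
        congr with a
        rw [← exp_add]
        ring_nf
    _ ≤ ∫ y, exp ((c / 2) ^ 2 * t ^ 2 / 2) * exp (t * (g y - m)) ∂ν :=
        integral_mono_of_nonneg (ae_of_all _ fun y => mul_nonneg mgf_nonneg (exp_nonneg _))
          ((hK.integrable_exp_mul t).const_mul _)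
          (ae_of_all _ fun y => mul_le_mul_of_nonneg_right (hfiber y) (exp_nonneg _))
    _ = exp ((c / 2) ^ 2 * t ^ 2 / 2) * mgf (fun y => g y - m) ν t := integral_const_mul _ _
    _ ≤ exp ((c / 2) ^ 2 * t ^ 2 / 2) * exp (K * t ^ 2 / 2) := by gcongr; exact hK.mgf_le t
    _ = exp (((c / 2) ^ 2 + K : ℝ≥0) * t ^ 2 / 2) := by
        rw [← exp_add]; push_cast; ring_nf

theorem hasSubgaussianMGF_pi_sub_integral_of_sub_le {N : ℕ} {𝒳 : Fin N → Type*}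
    [∀ i, MeasurableSpace (𝒳 i)] (μ : ∀ i, Measure (𝒳 i)) [∀ i, IsProbabilityMeasure (μ i)]
    {f : (∀ i, 𝒳 i) → ℝ} (hf : Measurable f) {M : ℝ} (hM : ∀ x, |f x| ≤ M) {c : Fin N → ℝ≥0}
    (hdiff : ∀ i x (b b' : 𝒳 i), f (Function.update x i b) - f (Function.update x i b') ≤ c i) :
    HasSubgaussianMGF (fun x => f x - ∫ y, f y ∂Measure.pi μ) (∑ i, (c i / 2) ^ 2)
      (Measure.pi μ) := by
  induction N with
  | zero =>
    have hconst (x : ∀ i, 𝒳 i) : f x - ∫ y, f y ∂Measure.pi μ = 0 := by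
      rw [integral_eq_const (ae_of_all _ fun y => congrArg f (Subsingleton.elim y x)), sub_self]
    simp [hconst]
  | succ N ih =>
    have he := measurePreserving_piFinSuccAbove μ 0
    let F : 𝒳 0 × (∀ j, 𝒳 (Fin.succAbove 0 j)) → ℝ := fun p => f (Fin.insertNth 0 p.1 p.2)
    have hF : Measurable F := hf.comp (MeasurableEquiv.piFinSuccAbove 𝒳 0).symm.measurable
    have hFbdd (p) : ‖F p‖ ≤ M := hM _
    have hFint {y} : Integrable (fun a => F (a, y)) (μ 0) :=
      .of_bound (hF.comp measurable_prodMk_right).aestronglyMeasurable M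
        (ae_of_all _ fun a => hFbdd _)
    have hFosc (a a' y) : F (a, y) - F (a', y) ≤ c 0 := by
      simpa only [Fin.update_insertNth] using hdiff 0 (Fin.insertNth 0 a y) a a'
    let g y := ∫ a, F (a, y) ∂μ 0
    have hgM (y) : |g y| ≤ M := by
      simpa using norm_integral_le_of_norm_le_const (ae_of_all (μ 0) fun a => hFbdd (a, y))
    have hgdiff (j y) (b b' : 𝒳 (Fin.succAbove 0 j)) :
        g (Function.update y j b) - g (Function.update y j b') ≤ c (Fin.succAbove 0 j) :=
      integral_sub_integral_le_of_sub_le hFint hFint fun a => by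
        simpa only [F, Fin.insertNth_update] using hdiff _ (Fin.insertNth 0 a y) b b'
    have hg := ih (fun j => μ (Fin.succAbove 0 j))
      hF.stronglyMeasurable.integral_prod_left'.measurable hgM hgdiff
    rw [← integral_prod_symm F (.of_bound hF.aestronglyMeasurable M (ae_of_all _ hFbdd))] at hg
    have hstep := HasSubgaussianMGF.prod_sub_integral hF (fun p => hM _) hFosc hg
    have hFe (x) : F (MeasurableEquiv.piFinSuccAbove 𝒳 0 x) = f x :=
      congrArg f ((MeasurableEquiv.piFinSuccAbove 𝒳 0).symm_apply_apply x)
    have hm : ∫ q, F q ∂(μ 0).prod (Measure.pi fun j => μ (Fin.succAbove 0 j))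
        = ∫ x, f x ∂Measure.pi μ := by
      rw [← he.integral_comp']; simp only [hFe]
    rw [hm, ← he.map_eq] at hstep
    convert hstep.of_map he.measurable.aemeasurable using 1
    · funext x; simp only [Function.comp, hFe]
    · rw [Fin.sum_univ_succAbove _ 0]

variable {Ω : Type*} [MeasurableSpace Ω] {P : Measure Ω}

lemma HasSubgaussianMGF.measure_gt_le [IsFiniteMeasure P] {Y : Ω → ℝ} {c : ℝ≥0}
    (h : HasSubgaussianMGF Y c P) {ε : ℝ} (hε : 0 ≤ ε) :
    P {ω | ε < Y ω} ≤ ENNReal.ofReal (exp (-ε ^ 2 / (2 * c))) := by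
  refine (measure_mono (Set.ofPred_subset_ofPred.2 fun ω => le_of_lt)).trans ?_
  rw [ENNReal.le_ofReal_iff_toReal_le (measure_ne_top _ _) (exp_nonneg _)]
  exact h.measure_ge_le hε

theorem hasSubgaussianMGF_sub_integral_of_iIndepFun {N : ℕ} {𝒳 : Fin N → Type*}
    [∀ i, MeasurableSpace (𝒳 i)] {X : ∀ i, Ω → 𝒳 i} (hX : ∀ i, Measurable (X i))
    (hind : iIndepFun X P) {f : (∀ i, 𝒳 i) → ℝ} (hf : Measurable f) {M : ℝ}
    (hM : ∀ x, |f x| ≤ M) {c : Fin N → ℝ≥0}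
    (hdiff : ∀ i x (b b' : 𝒳 i), f (Function.update x i b) - f (Function.update x i b') ≤ c i) :
    HasSubgaussianMGF (fun ω => f (fun i => X i ω) - ∫ ω', f (fun i => X i ω') ∂P)
      (∑ i, (c i / 2) ^ 2) P := by
  have := hind.isProbabilityMeasure
  have _ (i) : IsProbabilityMeasure (P.map (X i)) :=
    Measure.isProbabilityMeasure_map (hX i).aemeasurable
  have hXm : Measurable fun ω i => X i ω := measurable_pi_lambda _ hX
  have hlaw : P.map (fun ω i => X i ω) = Measure.pi fun i => P.map (X i) :=
    hind.map_fun_eq_pi_map fun i => (hX i).aemeasurable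
  have hpi := hasSubgaussianMGF_pi_sub_integral_of_sub_le (fun i => P.map (X i)) hf hM hdiff
  rw [← hlaw, integral_map hXm.aemeasurable hf.aestronglyMeasurable] at hpi
  exact hpi.of_map hXm.aemeasurable

end ProbabilityTheory

theorem mcdiarmid_general {Ω : Type*} [MeasureSpace Ω] [IsProbabilityMeasure (ℙ : Measure Ω)]
    (N : ℕ) (𝒳 : Fin N → Type*) [∀ i, MeasurableSpace (𝒳 i)]
    (X : ∀ i, Ω → 𝒳 i)
    (hmeas : ∀ i, Measurable (X i))
    (hind : iIndepFun X ℙ)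
    (f : (∀ i, 𝒳 i) → ℝ)
    (hf : Measurable f)
    (hbdd : ∃ M : ℝ, ∀ x, |f x| ≤ M)
    (c : Fin N → ℝ) (hc0 : ∀ i, 0 ≤ c i)
    (hdiff : ∀ (i : Fin N) (x : ∀ j, 𝒳 j) (b b' : 𝒳 i),
      |f (Function.update x i b) - f (Function.update x i b')| ≤ c i)
    (t : ℝ) (ht : 0 < t) :
    ℙ {ω | f (fun i => X i ω) > (𝔼[fun ω => f (fun i => X i ω)]) + t} ≤
        ENNReal.ofReal (Real.exp (-2 * t ^ 2 / ∑ i, (c i) ^ 2)) ∧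
    ℙ {ω | f (fun i => X i ω) < (𝔼[fun ω => f (fun i => X i ω)]) - t} ≤
        ENNReal.ofReal (Real.exp (-2 * t ^ 2 / ∑ i, (c i) ^ 2)) := by
  obtain ⟨M, hM⟩ := hbdd
  have hsub := hasSubgaussianMGF_sub_integral_of_iIndepFun hmeas hind hf hM
    (c := fun i => (c i).toNNReal) fun i x b b' => by
      rw [Real.coe_toNNReal _ (hc0 i)]
      exact (le_abs_self _).trans (hdiff i x b b')
  have hexponent : -t ^ 2 / (2 * ((∑ i, ((c i).toNNReal / 2) ^ 2 : ℝ≥0) : ℝ))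
      = -2 * t ^ 2 / ∑ i, c i ^ 2 := by
    have hsum : 2 * ∑ i, (c i / 2) ^ 2 = (∑ i, c i ^ 2) / 2 := by
      rw [Finset.mul_sum, Finset.sum_div]
      exact Finset.sum_congr rfl fun i _ => by ring
    push_cast [Real.coe_toNNReal _ (hc0 _)]
    rw [hsum, div_div_eq_mul_div]
    ring
  constructor
  · rw [← hexponent]
    refine (measure_mono fun ω (hω : _ > _ + t) => ?_).trans (hsub.measure_gt_le ht.le)
    show t < _ - _
    linarith
  · rw [← hexponent]
    refine (measure_mono fun ω (hω : _ < _ - t) => ?_).trans (hsub.neg.measure_gt_le ht.le)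
    show t < -(_ - _)
    linarith

/-- **McDiarmid's inequality** (method of bounded differences). -/
theorem mcdiarmid {Ω : Type*} [MeasureSpace Ω] [IsProbabilityMeasure (ℙ : Measure Ω)]
    (N : ℕ) (𝒳 : Fin N → Type*) [∀ i, MeasurableSpace (𝒳 i)]
    (X : ∀ i, Ω → 𝒳 i)
    (hmeas : ∀ i, Measurable (X i))
    (hind : iIndepFun X ℙ)
    (f : (∀ i, 𝒳 i) → ℝ)
    (hf : Measurable f)
    (hbdd : ∃ M : ℝ, ∀ x, |f x| ≤ M)
    (c : Fin N → ℝ) (hc0 : ∀ i, 0 ≤ c i)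
    (hdiff : ∀ (i : Fin N) (x : ∀ j, 𝒳 j) (b b' : 𝒳 i),
      |f (Function.update x i b) - f (Function.update x i b')| ≤ c i)
    (hcpos : 0 < ∑ i, (c i) ^ 2)
    (t : ℝ) (ht : 0 < t) :
    ℙ {ω | f (fun i => X i ω) > (𝔼[fun ω => f (fun i => X i ω)]) + t} ≤
        ENNReal.ofReal (Real.exp (-2 * t ^ 2 / ∑ i, (c i) ^ 2)) ∧
    ℙ {ω | f (fun i => X i ω) < (𝔼[fun ω => f (fun i => X i ω)]) - t} ≤
        ENNReal.ofReal (Real.exp (-2 * t ^ 2 / ∑ i, (c i) ^ 2)) :=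
  mcdiarmid_general N 𝒳 X hmeas hind f hf hbdd c hc0 hdiff t ht
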